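/- Let $d : \mathbb{N} \times \mathbb{N} \to \mathbb{R}$. Then $d$ satisfies the recurrence $d_{l,m} + d_{l+1,m+2} + d_{l+2,m+1} = d_{l+2,m+2} + d_{l,m+1} + d_{l+1,m}$ for all $l, m \geq 0$ if and only if there exists a function $k : \mathbb{N} \to \mathbb{R}$ such that $d_{l+1,m+2} - d_{l+1,m+1} - d_{l,m+1} + d_{l,m} = k(m)$ for all $l, m \geq 0$ (i.e., the left-hand side depends only on $m$ and not on $l$). -/

import Mathlib

def mixedDiff (d : ℕ × ℕ → ℝ) (l m : ℕ) : ℝ :=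
  d (l + 1, m + 2) - d (l + 1, m + 1) - d (l, m + 1) + d (l, m)

theorem exists_forall_eq_iff_forall_succ_eq {α : Type*} (g : ℕ → ℕ → α) :
    (∃ k : ℕ → α, ∀ l m, g l m = k m) ↔ ∀ l m, g (l + 1) m = g l m := by
  constructor
  · rintro ⟨k, hk⟩ l m
    rw [hk, hk]
  · intro h
    refine ⟨g 0, fun l m => ?_⟩
    induction l with
    | zero => rfl
    | succ l ih => rw [h, ih]

theorem recurrence_iff_mixedDiff_succ_eq (d : ℕ × ℕ → ℝ) (l m : ℕ) :
    d (l, m) + d (l + 1, m + 2) + d (l + 2, m + 1) =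
        d (l + 2, m + 2) + d (l, m + 1) + d (l + 1, m) ↔
      mixedDiff d (l + 1) m = mixedDiff d l m := by
  unfold mixedDiff
  constructor <;> intro h <;> linarith

/-- Proposition 1(iii): the universal degree recurrence is equivalent to
`d (l+1,m+2) - d (l+1,m+1) - d (l,m+1) + d (l,m)` depending only on `m`. -/
theorem stmt_2 (d : ℕ × ℕ → ℝ) :
    (∀ l m : ℕ, d (l, m) + d (l + 1, m + 2) + d (l + 2, m + 1) =
        d (l + 2, m + 2) + d (l, m + 1) + d (l + 1, m)) ↔
    (∃ k : ℕ → ℝ, ∀ l m : ℕ,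
        d (l + 1, m + 2) - d (l + 1, m + 1) - d (l, m + 1) + d (l, m) = k m) := by
  simp only [recurrence_iff_mixedDiff_succ_eq]
  exact (exists_forall_eq_iff_forall_succ_eq (mixedDiff d)).symm
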